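/- The ordering by weight on normal words is monomial for L-algebra normal forms: for all normal words u > v and any normal word w, one has [u ≻ w] > [v ≻ w], [w ≻ u] > [w ≻ v], [w ≺ u] > [w ≺ v], and [u ≺ w] > [v ≺ w], where [·] denotes the normal form in the free L-algebra. -/
import Mathlib


/-- Ω-words for Ω = {≺, ≻}: `p u v` denotes u ≺ v and `s u v` denotes u ≻ v. -/
inductive LW (X : Type) : Type
  | var : X → LW X
  | p : LW X → LW X → LW X
  | s : LW X → LW X → LW X
deriving DecidableEq

namespace LW

variable {X : Type}

/-- number of occurrences of variables, |u|_X -/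
def szX : LW X → ℕ
  | var _ => 1
  | p u v => szX u + szX v
  | s u v => szX u + szX v

/-- The weight-lexicographic ordering on Ω-words: wt(x) = (1,x),
wt(δᵢ(u₁,u₂)) = (|u|_X, δᵢ, u₁, u₂) with ≻ < ≺, compared lexicographically. -/
inductive LLt [LinearOrder X] : LW X → LW X → Prop
  | size {u v : LW X} : szX u < szX v → LLt u v
  | var {x y : X} : x < y → LLt (var x) (var y)
  | sp {u1 u2 v1 v2 : LW X} : szX (s u1 u2) = szX (p v1 v2) → LLt (s u1 u2) (p v1 v2)
  | s1 {u1 u2 v1 v2 : LW X} : szX (s u1 u2) = szX (s v1 v2) → LLt u1 v1 →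
      LLt (s u1 u2) (s v1 v2)
  | s2 {u1 u2 v2 : LW X} : szX (s u1 u2) = szX (s u1 v2) → LLt u2 v2 →
      LLt (s u1 u2) (s u1 v2)
  | p1 {u1 u2 v1 v2 : LW X} : szX (p u1 u2) = szX (p v1 v2) → LLt u1 v1 →
      LLt (p u1 u2) (p v1 v2)
  | p2 {u1 u2 v2 : LW X} : szX (p u1 u2) = szX (p u1 v2) → LLt u2 v2 →
      LLt (p u1 u2) (p u1 v2)

/-- Normal words: x ∈ X is normal; v ≻ w is normal if v, w are; v ≺ w is normal
if v, w are normal and v is not of the form v₁ ≻ v₂. -/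
inductive Normal : LW X → Prop
  | var {x : X} : Normal (var x)
  | suc {u v : LW X} : Normal u → Normal v → Normal (s u v)
  | pre {u v : LW X} : Normal u → Normal v → (∀ a b, u ≠ s a b) → Normal (p u v)

end LW

/-- A ⋆-Ω-word for Ω = {≺,≻}. -/
inductive LCtx (X : Type) : Type
  | hole : LCtx X
  | pL : LCtx X → LW X → LCtx X
  | pR : LW X → LCtx X → LCtx X
  | sL : LCtx X → LW X → LCtx X
  | sR : LW X → LCtx X → LCtx X

/-- Substitution of an Ω-word for ⋆ in a ⋆-Ω-word. -/
def LCtx.subst {X : Type} : LCtx X → LW X → LW X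
  | .hole, u => u
  | .pL c w, u => .p (c.subst u) w
  | .pR w c, u => .p w (c.subst u)
  | .sL c w, u => .s (c.subst u) w
  | .sR w c, u => .s w (c.subst u)
section

variable {X k : Type} [Field k]

/-- The free Ω-algebra k(X,Ω), Ω = {≺,≻}. -/
abbrev LPoly (X k : Type) [Field k] := LW X →₀ k

/-- The s-Ω-word u|_s, extended linearly. -/
noncomputable def applyC (c : LCtx X) (f : LPoly X k) : LPoly X k :=
  Finsupp.mapDomain c.subst f

/-- The Ω-ideal of k(X,Ω) generated by all (x≻y)≺z − x≻(y≺z). -/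
noncomputable def LRelId (X k : Type) [Field k] : Submodule k (LPoly X k) :=
  Submodule.span k {g | ∃ (c : LCtx X) (x y z : LW X),
    g = applyC c (Finsupp.single (.p (.s x y) z) (1 : k)
          - Finsupp.single (.s x (.p y z)) (1 : k))}

/-- The free L-algebra L(X) = k(X,Ω)/Id((x≻y)≺z − x≻(y≺z)). -/
abbrev FreeL (X k : Type) [Field k] := LPoly X k ⧸ LRelId X k

/-- The image of an Ω-word in the free L-algebra. -/
noncomputable def lmk (X k : Type) [Field k] (w : LW X) : FreeL X k :=
  Submodule.Quotient.mk (Finsupp.single w (1 : k))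

end
/-- `NFrel k u w`: w is the normal form [u] of the Ω-word u in L(X). -/
def NFrel (X k : Type) [Field k] (u w : LW X) : Prop :=
  LW.Normal w ∧ lmk X k u = lmk X k w
namespace LW

variable {X : Type}

/-- normal "product": normal form of p a b assuming a, b already normal -/
def nfp : LW X → LW X → LW X
  | var x, c => p (var x) c
  | p a b, c => p (p a b) c
  | s a b, c => s a (nfp b c)

/-- full normal form function -/
def nf : LW X → LW X
  | var x => var x
  | p a b => nfp (nf a) (nf b)
  | s a b => s (nf a) (nf b)

lemma szX_nfp (a b : LW X) : szX (nfp a b) = szX a + szX b := by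
  induction a generalizing b with
  | var x => simp [nfp, szX]
  | p a b iha ihb => simp [nfp, szX]
  | s a b iha ihb => simp [nfp, szX, ihb]; omega

lemma nf_eq_self {w : LW X} (h : Normal w) : nf w = w := by
  induction h with
  | var => rfl
  | suc h1 h2 ih1 ih2 => simp [nf, ih1, ih2]
  | @pre a b h1 h2 hne ih1 ih2 =>
      simp only [nf, ih1, ih2]
      cases a with
      | var x => rfl
      | p a b => rfl
      | s a b => exact absurd rfl (hne a b)

lemma nf_key (x y z : LW X) : nf (p (s x y) z) = nf (s x (p y z)) := by
  simp [nf, nfp]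

lemma nf_subst (c : LCtx X) {a b : LW X} (h : nf a = nf b) :
    nf (c.subst a) = nf (c.subst b) := by
  induction c with
  | hole => exact h
  | pL c w ih => simp [LCtx.subst, nf, ih]
  | pR w c ih => simp [LCtx.subst, nf, ih]
  | sL c w ih => simp [LCtx.subst, nf, ih]
  | sR w c ih => simp [LCtx.subst, nf, ih]

lemma szX_le_of_llt [LinearOrder X] {a b : LW X} (h : LLt a b) : szX a ≤ szX b := by
  cases h with
  | size h => omega
  | var h => exact le_refl _
  | sp h => omega
  | s1 h _ => omega
  | s2 h _ => omega
  | p1 h _ => omega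
  | p2 h _ => omega

lemma llt_s_left [LinearOrder X] {u v : LW X} (w : LW X) (h : LLt v u) :
    LLt (s v w) (s u w) := by
  rcases lt_or_eq_of_le (szX_le_of_llt h) with hlt | heq
  · exact .size (by simp [szX]; omega)
  · exact .s1 (by simp [szX, heq]) h

lemma llt_s_right [LinearOrder X] {u v : LW X} (w : LW X) (h : LLt v u) :
    LLt (s w v) (s w u) := by
  rcases lt_or_eq_of_le (szX_le_of_llt h) with hlt | heq
  · exact .size (by simp [szX]; omega)
  · exact .s2 (by simp [szX, heq]) h

lemma llt_nfp_right [LinearOrder X] {u v : LW X} (w : LW X) (h : LLt v u) :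
    LLt (nfp w v) (nfp w u) := by
  rcases lt_or_eq_of_le (szX_le_of_llt h) with hlt | heq
  · exact .size (by simp [szX_nfp]; omega)
  · induction w with
    | var x => exact .p2 (by simp [szX, heq]) h
    | p a b iha ihb => exact .p2 (by simp [szX, heq]) h
    | s a b iha ihb => exact .s2 (by simp [nfp, szX, szX_nfp, heq]) ihb

lemma llt_nfp_left [LinearOrder X] {u v : LW X} (w : LW X) (h : LLt v u) :
    LLt (nfp v w) (nfp u w) := by
  induction h with
  | size h => exact .size (by simp [szX_nfp]; omega)
  | var h => exact .p1 (rfl) (.var h)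
  | @sp a1 a2 b1 b2 h =>
      exact .sp (by simp [nfp, szX, szX_nfp] at h ⊢; omega)
  | @s1 a1 a2 b1 b2 hsz h ih =>
      exact .s1 (by simp [nfp, szX, szX_nfp] at hsz ⊢; omega) h
  | @s2 a1 a2 b2 hsz h ih =>
      exact .s2 (by simp [nfp, szX, szX_nfp] at hsz ⊢; omega) ih
  | @p1 a1 a2 b1 b2 hsz h ih =>
      exact .p1 (by simp [nfp, szX] at hsz ⊢; omega) (.p1 hsz h)
  | @p2 a1 a2 b2 hsz h ih =>
      exact .p1 (by simp [nfp, szX] at hsz ⊢; omega) (.p2 hsz h)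

end LW

section NFUnique

variable {X k : Type} [Field k]

noncomputable def nfMap (X k : Type) [Field k] : LPoly X k →ₗ[k] LPoly X k :=
  Finsupp.lmapDomain k k LW.nf

lemma nfMap_single (w : LW X) :
    nfMap X k (Finsupp.single w (1 : k)) = Finsupp.single (LW.nf w) 1 := by
  simp [nfMap, Finsupp.lmapDomain, Finsupp.mapDomain_single]

lemma LRelId_le_ker : LRelId X k ≤ LinearMap.ker (nfMap X k) := by
  rw [LRelId, Submodule.span_le]
  rintro g ⟨c, x, y, z, rfl⟩
  simp only [SetLike.mem_coe, LinearMap.mem_ker, applyC, nfMap,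
    Finsupp.lmapDomain_apply]
  rw [← Finsupp.mapDomain_comp, ← Finsupp.lmapDomain_apply k k, map_sub,
    Finsupp.lmapDomain_apply, Finsupp.lmapDomain_apply,
    Finsupp.mapDomain_single, Finsupp.mapDomain_single, Function.comp_apply,
    Function.comp_apply, LW.nf_subst c (LW.nf_key x y z), sub_self]

lemma nf_eq_of_lmk_eq {a b : LW X} (h : lmk X k a = lmk X k b) :
    LW.nf a = LW.nf b := by
  have hmem : Finsupp.single a (1 : k) - Finsupp.single b 1 ∈ LRelId X k :=
    (Submodule.Quotient.eq _).mp h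
  have := LRelId_le_ker hmem
  rw [LinearMap.mem_ker, map_sub, nfMap_single, nfMap_single, sub_eq_zero] at this
  rcases (Finsupp.single_eq_single_iff _ _ _ _).mp this with ⟨h1, _⟩ | ⟨h1, _⟩
  · exact h1
  · exact absurd h1 one_ne_zero

lemma NFrel_eq {t a : LW X} (h : NFrel X k t a) : a = LW.nf t := by
  obtain ⟨hn, he⟩ := h
  exact (LW.nf_eq_self hn).symm.trans (nf_eq_of_lmk_eq he).symm

end NFUnique

/-- the weight-lexicographic ordering on normal words is monomial
for L-algebra normal forms: u > v implies [u≻w] > [v≻w], [w≻u] > [w≻v],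
[w≺u] > [w≺v] and [u≺w] > [v≺w]. -/
theorem normal_order_monomial (X k : Type) [Field k] [LinearOrder X] [WellFoundedLT X]
    (u v w : LW X) (hu : LW.Normal u) (hv : LW.Normal v) (hw : LW.Normal w)
    (h : LW.LLt v u) :
    (∀ a b : LW X, NFrel X k (.s u w) a → NFrel X k (.s v w) b → LW.LLt b a) ∧
    (∀ a b : LW X, NFrel X k (.s w u) a → NFrel X k (.s w v) b → LW.LLt b a) ∧
    (∀ a b : LW X, NFrel X k (.p w u) a → NFrel X k (.p w v) b → LW.LLt b a) ∧
    (∀ a b : LW X, NFrel X k (.p u w) a → NFrel X k (.p v w) b → LW.LLt b a) := by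
  have nfu := LW.nf_eq_self hu
  have nfv := LW.nf_eq_self hv
  have nfw := LW.nf_eq_self hw
  refine ⟨?_, ?_, ?_, ?_⟩ <;> intro a b ha hb <;>
    rw [NFrel_eq ha, NFrel_eq hb] <;>
    simp only [LW.nf, nfu, nfv, nfw]
  · exact LW.llt_s_left w h
  · exact LW.llt_s_right w h
  · exact LW.llt_nfp_right w h
  · exact LW.llt_nfp_left w h
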